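/- arXiv:1006.3869 — 2 statements merged into one kernel-verified Lean document; each statement's English description precedes it below -/
import Mathlib

section
/- Let M be a finite connected matroid of positive rank and K any field. Then the multivariate Tutte polynomial Ẑ_M(q,v) is irreducible as a polynomial in q over the rational function field K(v). -/
open Polynomial MvPolynomial

/-- A finite matroid, presented by its ground set and rank function. -/
structure FinMatroid (α : Type) [DecidableEq α] where
  E : Finset α
  r : Finset α → ℕ

namespace FinMatroid
variable {α : Type} [DecidableEq α]

/-- The rank axioms for a matroid. -/
def Valid (M : FinMatroid α) : Prop :=
  M.r ∅ = 0 ∧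
  (∀ A, A ⊆ M.E → M.r A ≤ A.card) ∧
  (∀ A B, A ⊆ B → B ⊆ M.E → M.r A ≤ M.r B) ∧
  (∀ A B, A ⊆ M.E → B ⊆ M.E → M.r (A ∪ B) + M.r (A ∩ B) ≤ M.r A + M.r B)

/-- The rank `r(M) = r_M(E)` of the matroid. -/
def rank (M : FinMatroid α) : ℕ := M.r M.E

/-- A matroid is connected iff its ground set is nonempty and it admits no
nontrivial separation `E = A ∪ (E \ A)` with `r(A) + r(E \ A) = r(E)`. -/
def Connected (M : FinMatroid α) : Prop :=
  M.E.Nonempty ∧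
    ∀ A ⊆ M.E, A.Nonempty → A ≠ M.E → M.r A + M.r (M.E \ A) ≠ M.r M.E

/-- Deletion `M \ e`. -/
def delete (M : FinMatroid α) (e : α) : FinMatroid α :=
  ⟨M.E \ {e}, M.r⟩

/-- Contraction `M / e`, with rank function `A ↦ r(A ∪ {e}) - r({e})`. -/
def contract (M : FinMatroid α) (e : α) : FinMatroid α :=
  ⟨M.E \ {e}, fun A => M.r (A ∪ {e}) - M.r {e}⟩

/-- Restriction `M | C`. -/
def restrict (M : FinMatroid α) (C : Finset α) : FinMatroid α :=
  ⟨C, M.r⟩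

/-- The multivariate Tutte polynomial
`Ẑ_M(q, v) = ∑_{A ⊆ E} q^(r(M) - r_M(A)) ∏_{e ∈ A} v_e`,
as a polynomial in `q` over the polynomial ring `R[v]`. -/
noncomputable def Zhat (M : FinMatroid α) (R : Type) [CommRing R] :
    Polynomial (MvPolynomial α R) :=
  ∑ A ∈ M.E.powerset,
    Polynomial.C (∏ e ∈ A, MvPolynomial.X e) * Polynomial.X ^ (M.rank - M.r A)

/-- The multivariate Tutte polynomial viewed over the rational function field `K(v)`. -/
noncomputable def ZhatF (M : FinMatroid α) (K : Type) [Field K] :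
    Polynomial (FractionRing (MvPolynomial α K)) :=
  (Zhat M K).map (algebraMap (MvPolynomial α K) (FractionRing (MvPolynomial α K)))

end FinMatroid

/-- `galIsFullSymm p n` says that the Galois group of `p` is the full symmetric group
on the `n` roots of `p`: the action on the roots in the splitting field gives an
isomorphism onto the full permutation group of the roots, and there are `n` roots. -/
def galIsFullSymm {F : Type} [Field F] (p : Polynomial F) (n : ℕ) : Prop :=
  letI : Fact ((p.map (algebraMap F p.SplittingField)).Splits) :=
    ⟨Polynomial.SplittingField.splits p⟩
  Function.Bijective (Polynomial.Gal.galActionHom p p.SplittingField) ∧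
    Nat.card (p.rootSet p.SplittingField) = n

/-!
After swapping the roles of `q` and `v`, `Ẑ_M` becomes the multiaffine polynomial
`∑_S q^(r(M) - r(S)) v^S` over `K[q]`, whose top coefficient is `1` since `r(E) = r(M)`. In a
factorisation `P = F G` of a multiaffine polynomial every variable occurs in only one factor,
so `F` and `G` live in complementary sets of variables `A` and `Aᶜ`; comparing coefficients
of `v^A`, `v^Aᶜ`, `1` and `v^E` gives `c_A c_Aᶜ = c_∅ c_E`. For `Ẑ_M` this reads
`r(A) + r(E \ A) = r(M)`, a separation that connectivity rules out. Gauss's lemma transports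
irreducibility from `K[v][q]` to `K(v)[q]`, because `Ẑ_M` is monic: a connected matroid of
positive rank has no loops, so only `A = ∅` contributes to `q^r(M)`.
-/

namespace MvPolynomial

variable {σ R : Type*}

section CommSemiring

variable [CommSemiring R]

theorem isUnit_of_vars_eq_empty_of_isUnit_coeff_mul {F G : MvPolynomial σ R} {m : σ →₀ ℕ}
    (hF : F.vars = ∅) (h : IsUnit (coeff m (F * G))) : IsUnit F := by
  rw [vars_eq_empty_iff_eq_C] at hF
  rw [hF, coeff_C_mul] at h
  rw [hF]
  exact (isUnit_of_mul_isUnit_left h).map C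

noncomputable def squarefreeExponent (S : Finset σ) : σ →₀ ℕ := ∑ e ∈ S, Finsupp.single e 1

theorem squarefreeExponent_empty : squarefreeExponent (∅ : Finset σ) = 0 := by
  simp [squarefreeExponent]

variable [DecidableEq σ]

theorem coeff_mul_of_vars_subset_of_disjoint {F G : MvPolynomial σ R} {A : Finset σ}
    (hF : F.vars ⊆ A) (hG : Disjoint G.vars A) (m : σ →₀ ℕ) :
    coeff m (F * G) = coeff (m.filter (· ∈ A)) F * coeff (m.filter (· ∉ A)) G := by
  rw [coeff_mul, Finset.sum_eq_single (m.filter (· ∈ A), m.filter (· ∉ A))]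
  · rintro ⟨a, b⟩ hab hne
    by_contra h
    have ha : ∀ e ∉ A, a e = 0 := fun e he => Finsupp.notMem_support_iff.mp fun hea =>
      he (support_subset_vars_of_mem_support (mem_support_iff.mpr (left_ne_zero_of_mul h))
        |>.trans hF hea)
    have hb : ∀ e ∈ A, b e = 0 := fun e he => Finsupp.notMem_support_iff.mp fun heb =>
      Finset.disjoint_left.mp hG (support_subset_vars_of_mem_support
        (mem_support_iff.mpr (right_ne_zero_of_mul h)) heb) he
    rw [Finset.HasAntidiagonal.mem_antidiagonal] at hab
    refine hne (Prod.ext (Finsupp.ext fun e => ?_) (Finsupp.ext fun e => ?_)) <;>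
      by_cases he : e ∈ A <;> simp [← hab, he, ha, hb]
  · exact fun h => absurd (Finset.HasAntidiagonal.mem_antidiagonal.mpr
      (Finsupp.filter_add_filter_not _ _)) h

theorem coeff_filter_mul_coeff_filter_not {F G : MvPolynomial σ R} {A : Finset σ}
    (hF : F.vars ⊆ A) (hG : Disjoint G.vars A) (m : σ →₀ ℕ) :
    coeff (m.filter (· ∈ A)) (F * G) * coeff (m.filter (· ∉ A)) (F * G) =
      coeff 0 (F * G) * coeff m (F * G) := by
  have h₁ : (m.filter (· ∈ A)).filter (· ∈ A) = m.filter (· ∈ A) := by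
    ext e; by_cases he : e ∈ A <;> simp [he]
  have h₂ : (m.filter (· ∈ A)).filter (· ∉ A) = 0 := by ext e; by_cases he : e ∈ A <;> simp [he]
  have h₃ : (m.filter (· ∉ A)).filter (· ∈ A) = 0 := by ext e; by_cases he : e ∈ A <;> simp [he]
  have h₄ : (m.filter (· ∉ A)).filter (· ∉ A) = m.filter (· ∉ A) := by
    ext e; by_cases he : e ∈ A <;> simp [he]
  simp only [coeff_mul_of_vars_subset_of_disjoint hF hG, Finsupp.filter_zero, h₁, h₂, h₃, h₄]
  ring

theorem squarefreeExponent_apply (S : Finset σ) (e : σ) :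
    squarefreeExponent S e = if e ∈ S then 1 else 0 := by
  simp [squarefreeExponent, Finsupp.finsetSum_apply, Finsupp.single_apply]

theorem squarefreeExponent_injective : Function.Injective (squarefreeExponent (σ := σ)) := by
  intro S T h
  ext e
  have := DFunLike.congr_fun h e
  simp only [squarefreeExponent_apply] at this
  split_ifs at this <;> simp_all

theorem filter_mem_squarefreeExponent (S A : Finset σ) :
    (squarefreeExponent S).filter (· ∈ A) = squarefreeExponent (S ∩ A) := by
  ext e
  simp only [Finsupp.filter_apply, squarefreeExponent_apply, Finset.mem_inter]
  split_ifs <;> tauto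

theorem filter_not_mem_squarefreeExponent (S A : Finset σ) :
    (squarefreeExponent S).filter (· ∉ A) = squarefreeExponent (S \ A) := by
  ext e
  simp only [Finsupp.filter_apply, squarefreeExponent_apply, Finset.mem_sdiff]
  split_ifs <;> tauto

variable [Fintype σ]

noncomputable def multiaffine (c : Finset σ → R) : MvPolynomial σ R :=
  ∑ S, monomial (squarefreeExponent S) (c S)

theorem coeff_squarefreeExponent_multiaffine (c : Finset σ → R) (T : Finset σ) :
    coeff (squarefreeExponent T) (multiaffine c) = c T := by
  rw [multiaffine, coeff_sum, Finset.sum_eq_single T]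
  · simp [coeff_monomial]
  · exact fun S _ hST => by
      rw [coeff_monomial, if_neg (squarefreeExponent_injective.ne hST)]
  · simp

theorem degreeOf_multiaffine_le_one (c : Finset σ → R) (e : σ) :
    degreeOf e (multiaffine c) ≤ 1 := by
  refine (degreeOf_sum_le e _ _).trans (Finset.sup_le fun S _ => ?_)
  refine degreeOf_le_iff.mpr fun m hm => ?_
  rw [Finset.mem_singleton.mp (support_monomial_subset hm), squarefreeExponent_apply]
  split_ifs <;> simp

end CommSemiring

section Domain

variable [CommRing R] [IsDomain R]

theorem disjoint_vars_of_degreeOf_mul_le_one {F G : MvPolynomial σ R} (hF : F ≠ 0) (hG : G ≠ 0)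
    (h : ∀ e, degreeOf e (F * G) ≤ 1) : Disjoint F.vars G.vars := by
  refine Finset.disjoint_left.mpr fun e heF heG => ?_
  rw [mem_vars_iff_degreeOf_ne_zero] at heF heG
  have := h e
  rw [degreeOf_mul_eq hF hG] at this
  omega

variable [DecidableEq σ] [Fintype σ]

theorem irreducible_multiaffine (c : Finset σ → R) (hunit : IsUnit (c Finset.univ))
    (hempty : ¬IsUnit (c ∅))
    (hsplit : ∀ A : Finset σ, A.Nonempty → A ≠ Finset.univ → c A * c Aᶜ ≠ c ∅ * c Finset.univ) :
    Irreducible (multiaffine c) := by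
  refine ⟨fun h => hempty ?_, fun F G hFG => ?_⟩
  · have := h.map constantCoeff
    rwa [constantCoeff_eq, ← squarefreeExponent_empty, coeff_squarefreeExponent_multiaffine] at this
  by_contra! ⟨hF, hG⟩
  have htop : IsUnit (coeff (squarefreeExponent Finset.univ) (F * G)) := by
    rwa [← hFG, coeff_squarefreeExponent_multiaffine]
  have hFG0 : F * G ≠ 0 := fun h0 => by simp [h0] at htop
  have hdisj : Disjoint F.vars G.vars :=
    disjoint_vars_of_degreeOf_mul_le_one (left_ne_zero_of_mul hFG0) (right_ne_zero_of_mul hFG0)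
      (hFG ▸ degreeOf_multiaffine_le_one c)
  set A := F.vars
  have hA : A.Nonempty := Finset.nonempty_iff_ne_empty.mpr fun h =>
    hF (isUnit_of_vars_eq_empty_of_isUnit_coeff_mul h htop)
  have hAc : A ≠ Finset.univ := fun h => hG <| isUnit_of_vars_eq_empty_of_isUnit_coeff_mul
    (Finset.eq_empty_of_forall_notMem fun e he =>
      Finset.disjoint_right.mp hdisj he (h ▸ Finset.mem_univ e)) (mul_comm F G ▸ htop)
  refine hsplit A hA hAc ?_
  have := coeff_filter_mul_coeff_filter_not subset_rfl hdisj.symm (squarefreeExponent Finset.univ)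
  rwa [filter_mem_squarefreeExponent, filter_not_mem_squarefreeExponent, Finset.univ_inter,
    ← Finset.compl_eq_univ_sdiff, ← squarefreeExponent_empty, ← hFG,
    coeff_squarefreeExponent_multiaffine, coeff_squarefreeExponent_multiaffine,
    coeff_squarefreeExponent_multiaffine, coeff_squarefreeExponent_multiaffine] at this

end Domain

section Swap

variable (σ R) [CommSemiring R]

noncomputable def polynomialSwapEquiv : Polynomial (MvPolynomial σ R) ≃ₐ[R] MvPolynomial σ R[X] :=
  (optionEquivLeft R σ).symm.trans (optionEquivRight R σ)

variable {σ R}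

theorem polynomialSwapEquiv_C_X (e : σ) :
    polynomialSwapEquiv σ R (Polynomial.C (X e)) = X e := by
  rw [polynomialSwapEquiv, AlgEquiv.trans_apply, ← optionEquivLeft_X_some,
    AlgEquiv.symm_apply_apply, optionEquivRight_X_some]

theorem polynomialSwapEquiv_X : polynomialSwapEquiv σ R Polynomial.X = C Polynomial.X := by
  rw [polynomialSwapEquiv, AlgEquiv.trans_apply, ← optionEquivLeft_X_none,
    AlgEquiv.symm_apply_apply, optionEquivRight_X_none]

theorem polynomialSwapEquiv_C_prod_X_mul_X_pow (S : Finset σ) (k : ℕ) :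
    polynomialSwapEquiv σ R (Polynomial.C (∏ e ∈ S, X e) * Polynomial.X ^ k) =
      monomial (squarefreeExponent S) (Polynomial.X ^ k) := by
  rw [map_mul, map_pow, polynomialSwapEquiv_X, map_prod, map_prod, squarefreeExponent,
    monomial_sum_index, C_pow, mul_comm]
  simp only [polynomialSwapEquiv_C_X]
  rfl

end Swap

end MvPolynomial

namespace FinMatroid

variable {α : Type} [DecidableEq α] {M : FinMatroid α}

theorem r_le_rank (hV : M.Valid) {A : Finset α} (hA : A ⊆ M.E) : M.r A ≤ M.rank :=
  hV.2.2.1 A M.E hA subset_rfl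

theorem r_pos_of_connected (hV : M.Valid) (hC : M.Connected) (hr : 0 < M.rank) {A : Finset α}
    (hA : A ⊆ M.E) (hne : A.Nonempty) : 0 < M.r A := by
  by_contra! h0
  by_cases hAE : A = M.E
  · exact hr.ne' (by rw [rank, ← hAE]; omega)
  refine hC.2 A hA hne hAE (le_antisymm ?_ ?_)
  · rw [Nat.le_zero.mp h0, zero_add]
    exact hV.2.2.1 _ _ Finset.sdiff_subset subset_rfl
  · have := hV.2.2.2 A (M.E \ A) hA Finset.sdiff_subset
    rwa [Finset.union_sdiff_of_subset hA, Finset.inter_sdiff_self, hV.1, add_zero] at this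

theorem monic_zhat (hV : M.Valid) (hC : M.Connected) (hr : 0 < M.rank) (R : Type) [CommRing R] :
    (M.Zhat R).Monic := by
  refine monic_of_natDegree_le_of_coeff_eq_one M.rank ?_ ?_
  · refine natDegree_sum_le_of_forall_le _ _ fun A _ => ?_
    exact (natDegree_C_mul_le _ _).trans (natDegree_X_pow_le _ |>.trans (Nat.sub_le _ _))
  · rw [Zhat, finsetSum_coeff, Finset.sum_eq_single ∅]
    · simp [hV.1]
    · intro A hA hA0
      have hpos := r_pos_of_connected hV hC hr (Finset.mem_powerset.mp hA)
        (Finset.nonempty_iff_ne_empty.mpr hA0)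
      rw [Polynomial.coeff_C_mul, Polynomial.coeff_X_pow, if_neg (by omega), mul_zero]
    · simp

variable [Fintype α]

theorem r_add_r_compl_ne_rank (hE : M.E = Finset.univ) (hC : M.Connected) {A : Finset α}
    (hA : A.Nonempty) (hAu : A ≠ Finset.univ) : M.r A + M.r Aᶜ ≠ M.rank := by
  have := hC.2 A (hE ▸ Finset.subset_univ A) hA (hE ▸ hAu)
  rwa [rank, Finset.compl_eq_univ_sdiff, ← hE]

theorem polynomialSwapEquiv_zhat (hE : M.E = Finset.univ) (R : Type) [CommRing R] :
    polynomialSwapEquiv α R (M.Zhat R) = multiaffine fun S => Polynomial.X ^ (M.rank - M.r S) := by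
  simp only [Zhat, hE, Finset.powerset_univ, map_sum, polynomialSwapEquiv_C_prod_X_mul_X_pow,
    multiaffine]

end FinMatroid

/-- for a connected matroid of positive rank, `Ẑ_M` is irreducible
over the rational function field `K(v)`. -/
theorem stmt_3 {α : Type} [DecidableEq α] [Fintype α] (M : FinMatroid α)
    (hV : M.Valid) (hE : M.E = Finset.univ) (hC : M.Connected) (hr : 0 < M.rank)
    (K : Type) [Field K] :
    Irreducible (M.ZhatF K) := by
  rw [FinMatroid.ZhatF, ← (M.monic_zhat hV hC hr K).irreducible_iff_irreducible_map_fraction_map,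
    ← MulEquiv.irreducible_iff (polynomialSwapEquiv α K), FinMatroid.polynomialSwapEquiv_zhat hE]
  have hrank : M.r Finset.univ = M.rank := by rw [FinMatroid.rank, hE]
  refine irreducible_multiaffine _ (by simp [hrank]) ?_ fun A hA hAu h => ?_
  · simpa [hV.1] using (Polynomial.not_isUnit_X (R := K)).imp (isUnit_pow_iff hr.ne').mp
  · have hle := FinMatroid.r_le_rank hV (hE ▸ Finset.subset_univ A)
    have hle' := FinMatroid.r_le_rank hV (hE ▸ Finset.subset_univ Aᶜ)
    have hdeg := congrArg natDegree h
    rw [← pow_add, ← pow_add, natDegree_X_pow, natDegree_X_pow, hV.1, hrank] at hdeg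
    exact FinMatroid.r_add_r_compl_ne_rank hE hC hA hAu (by omega)
end

section
/- Let k be a field and f ∈ k[X] a monic polynomial of degree n whose non-leading coefficients a_0, …, a_{n-1} are algebraically independent over some subfield K ⊆ k with k = K(a_0,…,a_{n-1}). Then the Galois group of f over k is the full symmetric group S_n. -/
open Polynomial MvPolynomial

/-!
Over `L = K(x₁, …, xₙ)` the polynomial `∏ (X - xⱼ)` has, up to sign, the elementary symmetric
polynomials as coefficients, and these are algebraically independent. Hence `aᵢ ↦ coeffᵢ`
defines an embedding `k = K(a) → L` carrying `f` to `∏ (X - xⱼ)`: in `L` the polynomial `f` splits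
with the `n` distinct roots `xⱼ`. A permutation of the variables is an automorphism of `L` that
fixes the coefficients of `∏ (X - xⱼ)`, hence fixes `k`, and it permutes the roots in the same
way; so every permutation of the roots comes from the Galois group.
-/

theorem galIsFullSymm_iff {F : Type} [Field F] (p : F[X]) (E : Type) [Field E] [Algebra F E]
    [Fact ((p.map (algebraMap F E)).Splits)] (n : ℕ) :
    galIsFullSymm p n ↔
      Function.Bijective (Gal.galActionHom p E) ∧ Nat.card (p.rootSet E) = n := by
  have : Fact ((p.map (algebraMap F p.SplittingField)).Splits) := ⟨SplittingField.splits p⟩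
  let e := (Gal.rootsEquivRoots p p.SplittingField).symm.trans (Gal.rootsEquivRoots p E)
  have conj : ⇑(Gal.galActionHom p E) = e.permCongr ∘ Gal.galActionHom p p.SplittingField := by
    ext ϕ x
    simp [e, Gal.galActionHom, Gal.smul_def]
  rw [galIsFullSymm, conj, Equiv.comp_bijective, Nat.card_congr e]

theorem Polynomial.Gal.galActionHom_surjective_of_forall_exists_algEquiv {F E : Type*} [Field F]
    [Field E] [Algebra F E] (p : F[X]) [Fact ((p.map (algebraMap F E)).Splits)]
    (h : ∀ τ : Equiv.Perm (p.rootSet E), ∃ ϕ : Gal(E/F), ∀ x : p.rootSet E, ϕ x = τ x) :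
    Function.Surjective (galActionHom p E) := fun τ => by
  obtain ⟨ϕ, hϕ⟩ := h τ
  exact ⟨restrict p E ϕ, Equiv.ext fun x =>
    Subtype.ext ((galActionHom_restrict p E ϕ x).trans (hϕ x))⟩

theorem Polynomial.Monic.map_eq_of_coeff_eq {R S : Type*} [Semiring R] [Semiring S]
    [Nontrivial S] {f : R[X]} {g : S[X]} (hf : f.Monic) (hg : g.Monic)
    (hdeg : g.natDegree = f.natDegree) (φ : R →+* S)
    (h : ∀ i < f.natDegree, φ (f.coeff i) = g.coeff i) : f.map φ = g := by
  ext i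
  rw [Polynomial.coeff_map]
  rcases lt_trichotomy i f.natDegree with hi | rfl | hi
  · exact h i hi
  · rw [hf.coeff_natDegree, ← hdeg, hg.coeff_natDegree, map_one]
  · rw [coeff_eq_zero_of_natDegree_lt hi, map_zero, coeff_eq_zero_of_natDegree_lt (hdeg ▸ hi)]

theorem Polynomial.rootSet_eq_range_of_map_eq_prod {ι k L : Type*} [Fintype ι] [Field k]
    [Field L] [Algebra k L] {p : k[X]} {x : ι → L}
    (h : p.map (algebraMap k L) = ∏ i, (X - C (x i))) : p.rootSet L = Set.range x := by
  ext z
  have hne : ∏ i, (X - C (x i)) ≠ 0 := (monic_prod_of_monic _ _ fun i _ => monic_X_sub_C _).ne_zero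
  rw [mem_rootSet', ← eval_map_algebraMap, h]
  simp only [ne_eq, hne, not_false_eq_true, true_and, eval_prod, Finset.prod_eq_zero_iff,
    Finset.mem_univ, eval_sub, eval_X, eval_C, sub_eq_zero, Set.mem_range]
  exact exists_congr fun _ => eq_comm

theorem IntermediateField.algHom_ext_of_adjoin_eq_top {K k L : Type*} [Field K] [Field k]
    [Field L] [Algebra K k] [Algebra K L] {s : Set k} (hs : adjoin K s = ⊤)
    {φ₁ φ₂ : k →ₐ[K] L} (h : Set.EqOn φ₁ φ₂ s) : φ₁ = φ₂ := by
  have hadj : φ₁.comp (adjoin K s).val = φ₂.comp (adjoin K s).val :=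
    adjoin_algHom_ext K fun _ hx => h hx
  ext y
  exact DFunLike.congr_fun hadj ⟨y, hs ▸ trivial⟩

theorem AlgebraicIndependent.exists_algHom_of_adjoin_eq_top {ι K k L : Type*} [Field K]
    [Field k] [Field L] [Algebra K k] [Algebra K L] {a : ι → k} {b : ι → L}
    (ha : AlgebraicIndependent K a) (hgen : IntermediateField.adjoin K (Set.range a) = ⊤)
    (hb : AlgebraicIndependent K b) : ∃ φ : k →ₐ[K] L, ∀ i, φ (a i) = b i := by
  let e : k ≃ₐ[K] FractionRing (MvPolynomial ι K) :=
    (IntermediateField.topEquiv (F := K) (E := k)).symm.trans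
      ((IntermediateField.equivOfEq hgen.symm).trans ha.aevalEquivField.symm)
  have he : ∀ i, e (a i) = algebraMap (MvPolynomial ι K) _ (MvPolynomial.X i) := fun i => by
    apply ha.aevalEquivField.injective
    ext
    simp [e]
  refine ⟨(IntermediateField.adjoin K (Set.range b)).val.comp
    (hb.aevalEquivField.toAlgHom.comp e.toAlgHom), fun i => ?_⟩
  simp [he]

namespace MvPolynomial

section GenericPoly

variable (ι R : Type*) [Fintype ι] [CommRing R]

noncomputable def genericPoly : (MvPolynomial ι R)[X] :=
  ∏ i, (Polynomial.X - Polynomial.C (X i))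

theorem genericPoly_monic : (genericPoly ι R).Monic :=
  monic_prod_of_monic _ _ fun _ _ => monic_X_sub_C _

theorem natDegree_genericPoly [Nontrivial R] : (genericPoly ι R).natDegree = Fintype.card ι := by
  rw [genericPoly, natDegree_prod_of_monic _ _ fun _ _ => monic_X_sub_C _]
  simp

end GenericPoly

section Esymm

variable (R : Type*) [CommRing R]

theorem algebraicIndependent_esymm (n : ℕ) :
    AlgebraicIndependent R (fun i : Fin n => esymm (Fin n) R (i + 1)) := by
  rw [algebraicIndependent_iff_injective_aeval]
  have h : ⇑(aeval fun i : Fin n => esymm (Fin n) R (i + 1)) =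
      Subtype.val ∘ esymmAlgHom (Fin n) R n :=
    _root_.funext fun p => (esymmAlgHom_apply p).symm
  rw [h]
  exact Subtype.val_injective.comp (esymmAlgHom_fin_injective R le_rfl)

theorem aeval_neg_X_injective (σ : Type*) :
    Function.Injective (aeval fun i => -X i : MvPolynomial σ R →ₐ[R] MvPolynomial σ R) := by
  refine Function.LeftInverse.injective (g := aeval fun i => -X i) fun p => ?_
  rw [← AlgHom.comp_apply, ← AlgHom.id_apply (R := R) p]
  congr 1
  ext i
  simp

theorem algebraicIndependent_coeff_genericPoly (n : ℕ) :
    AlgebraicIndependent R (fun i : Fin n => (genericPoly (Fin n) R).coeff i) := by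
  set ν : MvPolynomial (Fin n) R →ₐ[R] MvPolynomial (Fin n) R := aeval fun i => -X i
  have hprod : genericPoly (Fin n) R =
      (∏ j : Fin n, (Polynomial.X + Polynomial.C (X j))).map
        (ν : MvPolynomial (Fin n) R →+* _) := by
    simp [genericPoly, Polynomial.map_prod, ν, sub_eq_add_neg]
  have hcoeff (i : Fin n) :
      (genericPoly (Fin n) R).coeff i = ν (esymm (Fin n) R ((Fin.rev i : ℕ) + 1)) := by
    rw [hprod, Polynomial.coeff_map, prod_X_add_C_coeff _ _ _ (by simp [i.is_lt.le]),
      Fintype.card_fin, Fin.val_rev, show n - ((i : ℕ) + 1) + 1 = n - i by omega]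
    rfl
  simp only [hcoeff]
  exact ((algebraicIndependent_esymm R n).comp _ Fin.rev_injective).map' (aeval_neg_X_injective R _)

end Esymm

variable {ι : Type*} (K : Type*) [Field K]

theorem algebraicIndependent_coeff_map_genericPoly (n : ℕ) :
    AlgebraicIndependent K fun i : Fin n =>
      ((genericPoly (Fin n) K).map
        (algebraMap _ (FractionRing (MvPolynomial (Fin n) K)))).coeff i := by
  simp only [Polynomial.coeff_map]
  exact (algebraicIndependent_coeff_genericPoly K n).map' (f := IsScalarTower.toAlgHom K _ _)
    (IsFractionRing.injective (MvPolynomial (Fin n) K) (FractionRing (MvPolynomial (Fin n) K)))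

noncomputable def permFractionRing (σ : Equiv.Perm ι) :
    FractionRing (MvPolynomial ι K) ≃ₐ[K] FractionRing (MvPolynomial ι K) :=
  IsFractionRing.fieldEquivOfAlgEquiv K _ _ (renameEquiv K σ)

theorem permFractionRing_algebraMap (σ : Equiv.Perm ι) (p : MvPolynomial ι K) :
    permFractionRing K σ (algebraMap _ _ p) = algebraMap _ _ (rename σ p) :=
  IsFractionRing.fieldEquivOfAlgEquiv_algebraMap K _ _ _ p

theorem permFractionRing_coeff_map_genericPoly [Fintype ι] (σ : Equiv.Perm ι) (i : ℕ) :
    permFractionRing K σ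
        (((genericPoly ι K).map (algebraMap _ (FractionRing (MvPolynomial ι K)))).coeff i) =
      ((genericPoly ι K).map (algebraMap _ (FractionRing (MvPolynomial ι K)))).coeff i := by
  rw [← RingHom.coe_coe, ← Polynomial.coeff_map]
  congr 1
  simp only [genericPoly, Polynomial.map_prod, Polynomial.map_sub, Polynomial.map_X,
    Polynomial.map_C, RingHom.coe_coe, permFractionRing_algebraMap, rename_X]
  exact Equiv.prod_comp σ fun i => Polynomial.X - Polynomial.C (algebraMap _ _ (X i))

end MvPolynomial

theorem galIsFullSymm_of_map_eq_genericPoly {ι K k : Type} [Fintype ι] [Field K] [Field k]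
    [Algebra k (FractionRing (MvPolynomial ι K))] (f : k[X])
    (hf : f.map (algebraMap k _) =
      (genericPoly ι K).map (algebraMap _ (FractionRing (MvPolynomial ι K))))
    (hfix : ∀ (σ : Equiv.Perm ι) (y : k),
      permFractionRing K σ (algebraMap k _ y) = algebraMap k _ y) :
    galIsFullSymm f (Fintype.card ι) := by
  let x : ι → FractionRing (MvPolynomial ι K) := fun i => algebraMap (MvPolynomial ι K) _ (X i)
  have hx : Function.Injective x := fun i j h =>
    X_injective (IsFractionRing.injective (MvPolynomial ι K) _ h)
  have hfx : f.map (algebraMap k _) = ∏ i, (Polynomial.X - Polynomial.C (x i)) := by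
    simp [hf, genericPoly, Polynomial.map_prod, x]
  have : Fact ((f.map (algebraMap k (FractionRing (MvPolynomial ι K)))).Splits) :=
    ⟨hfx ▸ Splits.prod fun i _ => Splits.X_sub_C _⟩
  let e : ι ≃ f.rootSet (FractionRing (MvPolynomial ι K)) :=
    (Equiv.ofInjective x hx).trans (Equiv.setCongr (rootSet_eq_range_of_map_eq_prod hfx).symm)
  have he (i : ι) : (e i : FractionRing (MvPolynomial ι K)) = x i := rfl
  rw [galIsFullSymm_iff f (FractionRing (MvPolynomial ι K)), Nat.card_congr e.symm,
    Nat.card_eq_fintype_card]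
  refine ⟨⟨Gal.galActionHom_injective f _, ?_⟩, rfl⟩
  refine Gal.galActionHom_surjective_of_forall_exists_algEquiv f fun τ => ?_
  let σ := e.permCongr.symm τ
  refine ⟨AlgEquiv.ofRingEquiv (f := (permFractionRing K σ).toRingEquiv) (hfix σ), fun y => ?_⟩
  obtain ⟨j, rfl⟩ := e.surjective y
  have hτ : τ (e j) = e (σ j) := by simp [σ, Equiv.permCongr_apply]
  rw [hτ, he, he, AlgEquiv.ofRingEquiv_apply, AlgEquiv.coe_ringEquiv, permFractionRing_algebraMap,
    rename_X]

/-- the generic monic polynomial of degree `n`, i.e. a monic polynomial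
whose non-leading coefficients are algebraically independent over a subfield `K`
with `k = K(a_0, …, a_{n-1})`, has Galois group the full symmetric group `S_n`. -/
theorem stmt_7 (K k : Type) [Field K] [Field k] [Algebra K k] (n : ℕ)
    (f : Polynomial k) (hf : f.Monic) (hd : f.natDegree = n)
    (hind : AlgebraicIndependent K (fun i : Fin n => f.coeff i))
    (hgen : IntermediateField.adjoin K (Set.range (fun i : Fin n => f.coeff i)) = ⊤) :
    galIsFullSymm f n := by
  obtain ⟨φ, hφ⟩ :=
    hind.exists_algHom_of_adjoin_eq_top hgen (algebraicIndependent_coeff_map_genericPoly K n)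
  let : Algebra k (FractionRing (MvPolynomial (Fin n) K)) := φ.toAlgebra
  have hmonic :=
    (genericPoly_monic (Fin n) K).map (algebraMap _ (FractionRing (MvPolynomial (Fin n) K)))
  have hfP := hf.map_eq_of_coeff_eq hmonic
    (by rw [(genericPoly_monic _ K).natDegree_map, natDegree_genericPoly, Fintype.card_fin, hd])
    (algebraMap k _) fun i hi => hφ ⟨i, hd ▸ hi⟩
  have hfix (σ : Equiv.Perm (Fin n)) : (permFractionRing K σ).toAlgHom.comp φ = φ :=
    IntermediateField.algHom_ext_of_adjoin_eq_top hgen <| by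
      rintro _ ⟨i, rfl⟩
      rw [AlgHom.comp_apply, hφ]
      exact permFractionRing_coeff_map_genericPoly K σ i
  simpa only [Fintype.card_fin] using
    galIsFullSymm_of_map_eq_genericPoly f hfP fun σ => DFunLike.congr_fun (hfix σ)
end
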